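/- arXiv:1406.0471 — 3 statements merged into one kernel-verified Lean document; each statement's English description precedes it below -/
import Mathlib

section
/- Let d, κ, β₊, β₋ ∈ (0,∞). Then for every continuously differentiable function ζ : [−d,0] → ℝ, min{κπ²/(4d²), β₊β₋/κ} · ∫_{−d}^{0} |ζ(r)|² dr ≤ κ∫_{−d}^{0} |ζ′(r)|² dr + β₊|ζ(0)|² + β₋|ζ(−d)|². -/
open MeasureTheory Real Set

/-!
Picone's identity: if `c + w²/κ ≤ w'` on `[a, b]`, then pointwise
`κ ζ'² + (w ζ²)' - c ζ² ≥ (κ ζ' + w ζ)² / κ ≥ 0`, and integrating gives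
`c ∫ ζ² ≤ κ ∫ ζ'² + w(b) ζ(b)² - w(a) ζ(a)²`.
The Riccati equation `w' = c + w²/κ` is solved by `w = κα tan (αx + θ)` with `α = √(c/κ)`.
It stays finite on `[a, b]` as long as `α (b - a) ≤ π/2`, i.e. `c ≤ κπ²/(4(b-a)²)`; the phase
`θ = arctan (p/(κα))` gives `w(b) = p`, and `w(a) ≥ -q` because
`arctan (p/k) + arctan (q/k) ≥ π/2` for `k² = κc ≤ pq`.
-/

theorem mul_sq_le_of_riccati {κ c w w' z z' : ℝ} (hκ : 0 < κ) (hric : c + w ^ 2 / κ ≤ w') :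
    c * z ^ 2 ≤ κ * z' ^ 2 + (w' * z ^ 2 + w * (2 * z * z')) := by
  have hsq : κ * z' ^ 2 + 2 * w * z * z' + w ^ 2 / κ * z ^ 2 = (κ * z' + w * z) ^ 2 / κ := by
    field_simp
    ring
  have hricz := mul_le_mul_of_nonneg_right hric (sq_nonneg z)
  nlinarith [div_nonneg (sq_nonneg (κ * z' + w * z)) hκ.le]

theorem integral_sq_le_of_riccati {a b κ c : ℝ} {w w' ζ ζ' : ℝ → ℝ} (hab : a ≤ b) (hκ : 0 < κ)
    (hw : ∀ x ∈ Icc a b, HasDerivAt w (w' x) x) (hw' : ContinuousOn w' (Icc a b))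
    (hζ : ∀ x ∈ Icc a b, HasDerivAt ζ (ζ' x) x) (hζ' : ContinuousOn ζ' (Icc a b))
    (hric : ∀ x ∈ Icc a b, c + w x ^ 2 / κ ≤ w' x) :
    c * ∫ x in a..b, ζ x ^ 2 ≤
      κ * (∫ x in a..b, ζ' x ^ 2) + (w b * ζ b ^ 2 - w a * ζ a ^ 2) := by
  have hwc : ContinuousOn w (Icc a b) := fun x hx => (hw x hx).continuousAt.continuousWithinAt
  have hζc : ContinuousOn ζ (Icc a b) := fun x hx => (hζ x hx).continuousAt.continuousWithinAt
  set g := fun x => w' x * ζ x ^ 2 + w x * (2 * ζ x * ζ' x)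
  have hg : IntervalIntegrable g volume a b := by
    apply ContinuousOn.intervalIntegrable_of_Icc hab
    fun_prop
  have hζ'sq : IntervalIntegrable (fun x => κ * ζ' x ^ 2) volume a b := by
    apply ContinuousOn.intervalIntegrable_of_Icc hab
    fun_prop
  have hζsq : IntervalIntegrable (fun x => c * ζ x ^ 2) volume a b := by
    apply ContinuousOn.intervalIntegrable_of_Icc hab
    fun_prop
  have hftc : ∫ x in a..b, g x = w b * ζ b ^ 2 - w a * ζ a ^ 2 := by
    refine intervalIntegral.integral_eq_sub_of_hasDerivAt (f := fun x => w x * ζ x ^ 2)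
      (fun x hx => ?_) hg
    rw [uIcc_of_le hab] at hx
    refine ((hw x hx).fun_mul ((hζ x hx).fun_pow 2)).congr_deriv ?_
    simp only [g]
    ring
  calc c * ∫ x in a..b, ζ x ^ 2 = ∫ x in a..b, c * ζ x ^ 2 :=
        (intervalIntegral.integral_const_mul _ _).symm
    _ ≤ ∫ x in a..b, (κ * ζ' x ^ 2 + g x) :=
        intervalIntegral.integral_mono_on hab hζsq (hζ'sq.add hg)
          fun x hx => mul_sq_le_of_riccati hκ (hric x hx)
    _ = κ * (∫ x in a..b, ζ' x ^ 2) + (w b * ζ b ^ 2 - w a * ζ a ^ 2) := by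
        rw [intervalIntegral.integral_add hζ'sq hg, intervalIntegral.integral_const_mul, hftc]

theorem hasDerivAt_mul_tan {κ α θ x : ℝ} (hκ : κ ≠ 0) (hcos : cos (α * x + θ) ≠ 0) :
    HasDerivAt (fun x => κ * α * tan (α * x + θ))
      (κ * α ^ 2 + (κ * α * tan (α * x + θ)) ^ 2 / κ) x := by
  have hlin : HasDerivAt (fun x => α * x + θ) α x := by
    simpa using ((hasDerivAt_id x).const_mul α).add_const θ
  refine (((hasDerivAt_tan hcos).comp x hlin).const_mul (κ * α)).congr_deriv ?_
  rw [← inv_one_add_tan_sq hcos]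
  field_simp

theorem neg_arctan_le_arctan_sub {k p q L : ℝ} (hk : 0 < k) (hp : 0 < p) (hkpq : k ^ 2 ≤ p * q)
    (hL : L ≤ π / 2) : -arctan (q / k) ≤ arctan (p / k) - L := by
  have hcompl : arctan (p / k) - π / 2 = -arctan (k / p) := by
    rw [← inv_div p k, arctan_inv_of_pos (div_pos hp hk)]
    ring
  have hmono : arctan (k / p) ≤ arctan (q / k) :=
    arctan_strictMono.monotone <| (div_le_div_iff₀ hp hk).2 (by nlinarith)
  linarith

theorem exists_riccati_multiplier {a b κ c p q : ℝ} (hab : a ≤ b) (hκ : 0 < κ) (hc : 0 < c)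
    (hp : 0 < p) (hq : 0 < q) (hlen : c * (b - a) ^ 2 ≤ κ * π ^ 2 / 4) (hpq : κ * c ≤ p * q) :
    ∃ w : ℝ → ℝ, (∀ x ∈ Icc a b, HasDerivAt w (c + w x ^ 2 / κ) x) ∧ w b = p ∧ -q ≤ w a := by
  set α := √(c / κ)
  set k := κ * α
  set θ := arctan (p / k)
  have hα : 0 < α := sqrt_pos.2 (div_pos hc hκ)
  have hk : 0 < k := mul_pos hκ hα
  have hκα : κ * α ^ 2 = c := by
    rw [sq_sqrt (div_pos hc hκ).le]
    field_simp
  have hangle : α * (b - a) ≤ π / 2 := by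
    have hsq : κ * (α * (b - a)) ^ 2 ≤ κ * (π / 2) ^ 2 := by
      calc κ * (α * (b - a)) ^ 2 = c * (b - a) ^ 2 := by rw [← hκα]; ring
        _ ≤ κ * π ^ 2 / 4 := hlen
        _ = κ * (π / 2) ^ 2 := by ring
    exact (pow_le_pow_iff_left₀ (by nlinarith) (by positivity) two_ne_zero).1
      (le_of_mul_le_mul_left hsq hκ)
  have hlow : -arctan (q / k) ≤ θ - α * (b - a) :=
    neg_arctan_le_arctan_sub hk hp (by nlinarith) hangle
  have harg : ∀ x ∈ Icc a b, α * x + (θ - α * b) ∈ Icc (-arctan (q / k)) θ := by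
    intro x hx
    constructor <;> nlinarith [hx.1, hx.2]
  have hIoo : ∀ x ∈ Icc a b, α * x + (θ - α * b) ∈ Ioo (-(π / 2)) (π / 2) := fun x hx =>
    ⟨by linarith [(harg x hx).1, arctan_lt_pi_div_two (q / k)],
      (harg x hx).2.trans_lt (arctan_lt_pi_div_two _)⟩
  refine ⟨fun x => k * tan (α * x + (θ - α * b)), fun x hx => ?_, ?_, ?_⟩
  · rw [← hκα]
    exact hasDerivAt_mul_tan hκ.ne' (cos_pos_of_mem_Ioo (hIoo x hx)).ne'
  · show k * tan (α * b + (θ - α * b)) = p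
    rw [add_sub_cancel, tan_arctan]
    field_simp
  · have hmono : tan (arctan (-(q / k))) ≤ tan (α * a + (θ - α * b)) :=
      strictMonoOn_tan.monotoneOn (arctan_mem_Ioo _) (hIoo a ⟨le_rfl, hab⟩)
        (by rw [arctan_neg]; exact (harg a ⟨le_rfl, hab⟩).1)
    rw [tan_arctan] at hmono
    calc -q = k * -(q / k) := by field_simp
      _ ≤ k * tan (α * a + (θ - α * b)) := mul_le_mul_of_nonneg_left hmono hk.le

theorem integral_sq_le_robin {a b κ c p q : ℝ} {ζ ζ' : ℝ → ℝ} (hab : a ≤ b) (hκ : 0 < κ)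
    (hc : 0 < c) (hp : 0 < p) (hq : 0 < q) (hlen : c * (b - a) ^ 2 ≤ κ * π ^ 2 / 4)
    (hpq : κ * c ≤ p * q) (hζ : ∀ x ∈ Icc a b, HasDerivAt ζ (ζ' x) x)
    (hζ' : ContinuousOn ζ' (Icc a b)) :
    c * ∫ x in a..b, ζ x ^ 2 ≤ κ * (∫ x in a..b, ζ' x ^ 2) + p * ζ b ^ 2 + q * ζ a ^ 2 := by
  obtain ⟨w, hw, hwb, hwa⟩ := exists_riccati_multiplier hab hκ hc hp hq hlen hpq
  have hwc : ContinuousOn w (Icc a b) := fun x hx => (hw x hx).continuousAt.continuousWithinAt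
  have hpicone := integral_sq_le_of_riccati hab hκ hw (by fun_prop) hζ hζ' fun _ _ => le_rfl
  rw [hwb] at hpicone
  nlinarith [mul_le_mul_of_nonneg_right hwa (sq_nonneg (ζ a))]

/-- **One-dimensional coercivity of the Robin dissipation functional, case
`β₊, β₋ ∈ (0,∞)`.**  For every continuously differentiable `ζ : [-d,0] → ℝ`,
`min{κπ²/(4d²), β₊β₋/κ} ⬝ ∫_{-d}^0 |ζ|² ≤ κ ∫_{-d}^0 |ζ'|² + β₊|ζ(0)|² + β₋|ζ(-d)|²`. -/
theorem one_dim_coercivity_robin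
    (d κ βp βm : ℝ) (hd : 0 < d) (hκ : 0 < κ) (hβp : 0 < βp) (hβm : 0 < βm)
    (ζ : ℝ → ℝ) (hζ : ContDiff ℝ 1 ζ) :
    min (κ * π ^ 2 / (4 * d ^ 2)) (βp * βm / κ) * (∫ r in Ioo (-d) 0, (ζ r) ^ 2) ≤
      κ * (∫ r in Ioo (-d) 0, (deriv ζ r) ^ 2) + βp * (ζ 0) ^ 2 + βm * (ζ (-d)) ^ 2 := by
  set c := min (κ * π ^ 2 / (4 * d ^ 2)) (βp * βm / κ)
  have hc : 0 < c := lt_min (by positivity) (by positivity)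
  have hlen : c * (0 - -d) ^ 2 ≤ κ * π ^ 2 / 4 := by
    have hleft := (le_div_iff₀ (by positivity)).1 (min_le_left _ _ : c ≤ κ * π ^ 2 / (4 * d ^ 2))
    linarith
  have hpq : κ * c ≤ βp * βm := by
    have hright := (le_div_iff₀ hκ).1 (min_le_right _ _ : c ≤ βp * βm / κ)
    linarith
  have hdiff : ∀ x ∈ Icc (-d) 0, HasDerivAt ζ (deriv ζ x) x := fun x _ =>
    (hζ.differentiable one_ne_zero x).hasDerivAt
  have hle : -d ≤ 0 := neg_nonpos.2 hd.le
  simp only [← integral_Ioc_eq_integral_Ioo, ← intervalIntegral.integral_of_le hle]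
  exact integral_sq_le_robin hle hκ hc hβp hβm hlen hpq hdiff
    (hζ.continuous_deriv le_rfl).continuousOn
end

section
/- Let d, κ ∈ (0,∞) and β₋ ∈ (0,∞). Then for every continuously differentiable function ζ : [−d,0] → ℝ, (4d²/(κπ²) + d/β₋)^{−1} · ∫_{−d}^{0} |ζ(r)|² dr ≤ κ∫_{−d}^{0} |ζ′(r)|² dr + β₋|ζ(−d)|². -/
/-!
Write `ζ = (ζ - ζ (-d)) + ζ (-d)`. The first summand vanishes at `-d`, so by the Wirtinger
inequality for the mixed Dirichlet–Neumann problem on `[-d, 0]` its squared `L²` norm is at most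
`(4d²/(κπ²)) · κ∫|ζ'|²`; the constant summand has squared norm `d ζ(-d)² = (d/β₋) · β₋ζ(-d)²`.
Titu's inequality `(x + y)² ≤ (p + q)(x²/p + y²/q)` adds the two compliances `p`, `q`, which is
where the constant comes from.

The Wirtinger inequality comes from the ground-state substitution
`ζ'² - ω²ζ² = (ζ' + ω tan(ω(r - b)) ζ)² - (ω tan(ω(r - b)) ζ²)'`, valid for `ω(b - a) < π/2`,
in the limit `ω → π/(2(b - a))`.
-/

open MeasureTheory Real Set
open scoped Topology

lemma add_sq_le_mul_add_div {x y p q : ℝ} (hp : 0 < p) (hq : 0 < q) :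
    (x + y) ^ 2 ≤ (p + q) * (x ^ 2 / p + y ^ 2 / q) := by
  have h := Finset.sq_sum_div_le_sum_sq_div Finset.univ ![x, y] (g := ![p, q])
    (by simp [Fin.forall_fin_two, hp, hq])
  simp only [Fin.sum_univ_two, Matrix.cons_val_zero, Matrix.cons_val_one] at h
  rwa [div_le_iff₀ (by positivity), mul_comm] at h

lemma integral_sq_le_mul_integral_sub_sq_div_add {ζ : ℝ → ℝ} {a b p q : ℝ}
    (hζ : Continuous ζ) (hab : a ≤ b) (c : ℝ) (hp : 0 < p) (hq : 0 < q) :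
    ∫ r in a..b, ζ r ^ 2 ≤
      (p + q) * ((∫ r in a..b, (ζ r - c) ^ 2) / p + (b - a) * c ^ 2 / q) := by
  calc ∫ r in a..b, ζ r ^ 2
      ≤ ∫ r in a..b, (p + q) * ((ζ r - c) ^ 2 / p + c ^ 2 / q) := by
        refine intervalIntegral.integral_mono_on hab
          (Continuous.intervalIntegrable (by fun_prop) _ _)
          (Continuous.intervalIntegrable (by fun_prop) _ _) fun r _ ↦ ?_
        simpa using add_sq_le_mul_add_div (x := ζ r - c) (y := c) hp hq
    _ = (p + q) * ((∫ r in a..b, (ζ r - c) ^ 2) / p + (b - a) * c ^ 2 / q) := by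
        rw [intervalIntegral.integral_const_mul, intervalIntegral.integral_add
          (Continuous.intervalIntegrable (by fun_prop) _ _) intervalIntegrable_const,
          intervalIntegral.integral_div, intervalIntegral.integral_const, smul_eq_mul,
          mul_div_assoc]

section Wirtinger

variable {ζ : ℝ → ℝ} {a b ω r : ℝ}

lemma hasDerivAt_neg_mul_tan_mul_sq (hζ : DifferentiableAt ℝ ζ r)
    (hcos : cos (ω * (r - b)) ≠ 0) :
    HasDerivAt (fun s ↦ -(ω * tan (ω * (s - b)) * ζ s ^ 2))
      (deriv ζ r ^ 2 - ω ^ 2 * ζ r ^ 2 - (deriv ζ r + ω * tan (ω * (r - b)) * ζ r) ^ 2) r := by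
  have hlin : HasDerivAt (fun s ↦ ω * (s - b)) ω r := by
    simpa using ((hasDerivAt_id r).sub_const b).const_mul ω
  have htan := (hasDerivAt_tan hcos).comp r hlin
  refine (((htan.const_mul ω).mul (hζ.hasDerivAt.pow 2)).neg).congr_deriv ?_
  simp only [Function.comp_apply, Pi.pow_apply, tan_eq_sin_div_cos]
  field_simp
  linear_combination (ω ^ 2 * ζ r ^ 2) * sin_sq_add_cos_sq (ω * (r - b))

theorem sq_mul_integral_sq_le_integral_deriv_sq_add_tan (hζ : ContDiff ℝ 1 ζ) (hab : a ≤ b)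
    (hω : 0 ≤ ω) (hωπ : ω * (b - a) < π / 2) :
    ω ^ 2 * ∫ r in a..b, ζ r ^ 2 ≤
      (∫ r in a..b, deriv ζ r ^ 2) + ω * tan (ω * (b - a)) * ζ a ^ 2 := by
  have hcos : ∀ r ∈ Icc a b, cos (ω * (r - b)) ≠ 0 := fun r hr ↦
    (cos_pos_of_mem_Ioo ⟨by nlinarith [hr.1], by nlinarith [hr.2, pi_pos]⟩).ne'
  have hg r (hr : r ∈ Icc a b) :=
    hasDerivAt_neg_mul_tan_mul_sq (hζ.differentiable one_ne_zero r) (hcos r hr)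
  have hζ' := hζ.continuous_deriv le_rfl
  have hζc := hζ.continuous
  have key := intervalIntegral.sub_le_integral_of_hasDeriv_right_of_le hab
    (fun r hr ↦ (hg r hr).continuousAt.continuousWithinAt)
    (fun r hr ↦ (hg r (Ioo_subset_Icc_self hr)).hasDerivWithinAt)
    (by fun_prop : Continuous fun r ↦ deriv ζ r ^ 2 - ω ^ 2 * ζ r ^ 2).integrableOn_Icc
    (fun r _ ↦ sub_le_self _ (sq_nonneg _))
  rw [intervalIntegral.integral_sub (Continuous.intervalIntegrable (by fun_prop) _ _)
      (Continuous.intervalIntegrable (by fun_prop) _ _),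
    intervalIntegral.integral_const_mul, ← neg_sub b a, mul_neg, tan_neg] at key
  simp only [sub_self, mul_zero, tan_zero, zero_mul, neg_zero] at key
  linarith

theorem sq_pi_div_mul_integral_sq_le_integral_deriv_sq (hζ : ContDiff ℝ 1 ζ) (hab : a < b)
    (ha : ζ a = 0) :
    (π / (2 * (b - a))) ^ 2 * ∫ r in a..b, ζ r ^ 2 ≤ ∫ r in a..b, deriv ζ r ^ 2 := by
  have hK : 0 < π / (2 * (b - a)) := by have := sub_pos.2 hab; positivity
  set K := π / (2 * (b - a))
  have hlim : Filter.Tendsto (fun ω ↦ ω ^ 2 * ∫ r in a..b, ζ r ^ 2) (𝓝[<] K)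
      (𝓝 (K ^ 2 * ∫ r in a..b, ζ r ^ 2)) :=
    ((continuous_pow 2).mul continuous_const).tendsto K |>.mono_left nhdsWithin_le_nhds
  refine le_of_tendsto hlim ?_
  filter_upwards [Ioo_mem_nhdsLT hK] with ω hω
  have hωπ : ω * (b - a) < π / 2 := by
    calc ω * (b - a) < K * (b - a) := mul_lt_mul_of_pos_right hω.2 (sub_pos.2 hab)
      _ = π / 2 := by simp only [K]; field_simp [(sub_pos.2 hab).ne']
  simpa [ha] using sq_mul_integral_sq_le_integral_deriv_sq_add_tan hζ hab.le hω.1.le hωπ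

end Wirtinger

/-- **One-dimensional coercivity of the dissipation functional, case
`β₊ = 0`, `β₋ ∈ (0,∞)`.**  For every continuously differentiable `ζ : [-d,0] → ℝ`,
`(4d²/(κπ²) + d/β₋)⁻¹ ⬝ ∫_{-d}^0 |ζ|² ≤ κ ∫_{-d}^0 |ζ'|² + β₋|ζ(-d)|²`. -/
theorem one_dim_coercivity_neumann_robin
    (d κ βm : ℝ) (hd : 0 < d) (hκ : 0 < κ) (hβm : 0 < βm)
    (ζ : ℝ → ℝ) (hζ : ContDiff ℝ 1 ζ) :
    (4 * d ^ 2 / (κ * π ^ 2) + d / βm)⁻¹ * (∫ r in Ioo (-d) 0, (ζ r) ^ 2) ≤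
      κ * (∫ r in Ioo (-d) 0, (deriv ζ r) ^ 2) + βm * (ζ (-d)) ^ 2 := by
  set c := ζ (-d)
  set p := 4 * d ^ 2 / (κ * π ^ 2)
  set q := d / βm
  have hp : 0 < p := by positivity
  have hq : 0 < q := by positivity
  have hwirtinger : (π / (2 * d)) ^ 2 * ∫ r in -d..0, (ζ r - c) ^ 2 ≤
      ∫ r in -d..0, deriv ζ r ^ 2 := by
    simpa using sq_pi_div_mul_integral_sq_le_integral_deriv_sq (hζ.sub contDiff_const)
      (neg_lt_zero.2 hd) (sub_self c)
  have hsplit := integral_sq_le_mul_integral_sub_sq_div_add hζ.continuous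
    (neg_nonpos.2 hd.le) c hp hq
  rw [sub_neg_eq_add, zero_add] at hsplit
  rw [← integral_Ioc_eq_integral_Ioo, ← integral_Ioc_eq_integral_Ioo,
    ← intervalIntegral.integral_of_le (neg_nonpos.2 hd.le),
    ← intervalIntegral.integral_of_le (neg_nonpos.2 hd.le), inv_mul_le_iff₀ (by positivity)]
  refine hsplit.trans (mul_le_mul_of_nonneg_left ?_ (by positivity))
  have hp_div : (∫ r in -d..0, (ζ r - c) ^ 2) / p =
      κ * ((π / (2 * d)) ^ 2 * ∫ r in -d..0, (ζ r - c) ^ 2) := by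
    simp only [p]; field_simp; ring
  have hq_div : d * c ^ 2 / q = βm * c ^ 2 := by simp only [q]; field_simp
  rw [hp_div, hq_div]
  gcongr
end

section
/- Let d, κ, β₊, β₋, L₁, L₂ ∈ (0,∞), let Γ = (L₁𝕋)×(L₂𝕋) and Ω = Γ×(−d,0), with Σ₊ = Γ×{0} and Σ₋ = Γ×{−d}. Then for every continuously differentiable function φ : Γ×[−d,0] → ℝ, min{κπ²/(4d²), β₊β₋/κ} · ∫_Ω |φ|² dx ≤ κ∫_Ω |∂₃φ|² dx + β₊∫_{Σ₊}|φ|² + β₋∫_{Σ₋}|φ|² ≤ κ∫_Ω |∇φ|² dx + β₊∫_{Σ₊}|φ|² + β₋∫_{Σ₋}|φ|². -/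
/-!
On each vertical fibre `z ↦ φ(x, y, z)` the estimate is a one-dimensional Poincaré inequality
with Robin boundary terms; integrating it over `Γ` (Fubini) gives the first inequality, and the
second is `|∂₃φ|² ≤ |∇φ|²`.

The one-dimensional inequality comes from a Riccati substitution: if `h' + h² / κ + m ≤ 0`, then
`κ f'² - m f² - (h f²)' = κ (f' - h f / κ)² - (h' + h² / κ + m) f² ≥ 0`, and integrating leaves
only the boundary values of `h f²`. With `α = √(m / κ)`, `h z = -κ α tan (α z + s)` is an exact
solution. The bound `m ≤ κπ² / (4d²)` gives `α d ≤ π / 2`, so `h` has no pole on `[-d, 0]`, and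
`m ≤ β₊β₋ / κ` leaves room for a shift `s` with `κ α tan s ≤ β₊` and `κ α tan (α d - s) ≤ β₋`.
-/

open MeasureTheory Real Set

noncomputable section

/-- Partial derivative of `f : ℝ³ → ℝ` in the `i`-th coordinate direction. -/
def pd (i : Fin 3) (f : (Fin 3 → ℝ) → ℝ) (x : Fin 3 → ℝ) : ℝ :=
  fderiv ℝ f x (Pi.single i 1)

/-- Fundamental domain `(0,L₁)×(0,L₂)×(−d,0)` of the periodic slab `Ω = Γ×(−d,0)`. -/
def slab (L₁ L₂ d : ℝ) : Set (Fin 3 → ℝ) :=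
  Set.univ.pi ![Ioo 0 L₁, Ioo 0 L₂, Ioo (-d) 0]

/-- Fundamental domain of the horizontal cross-section `Γ = (L₁𝕋)×(L₂𝕋)`. -/
def rect (L₁ L₂ : ℝ) : Set (ℝ × ℝ) := Ioo 0 L₁ ×ˢ Ioo 0 L₂

theorem mul_integral_sq_le_of_riccati {a b κ m : ℝ} (hab : a ≤ b) (hκ : 0 < κ)
    {f h h' : ℝ → ℝ} (hf : ContDiff ℝ 1 f) (hh : ∀ z ∈ Icc a b, HasDerivAt h (h' z) z)
    (hh' : ContinuousOn h' (Icc a b)) (hric : ∀ z ∈ Icc a b, h' z + h z ^ 2 / κ + m ≤ 0) :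
    m * (∫ z in a..b, f z ^ 2) + (h b * f b ^ 2 - h a * f a ^ 2)
      ≤ κ * ∫ z in a..b, deriv f z ^ 2 := by
  have hfc : Continuous f := hf.continuous
  have hf'c : Continuous (deriv f) := hf.continuous_deriv le_rfl
  have hhc : ContinuousOn h (Icc a b) := fun z hz => (hh z hz).continuousAt.continuousWithinAt
  set G' : ℝ → ℝ := fun z => h' z * f z ^ 2 + h z * (2 * f z * deriv f z)
  have hG'c : ContinuousOn G' (Icc a b) := by
    have := hfc.continuousOn (s := Icc a b)
    have := hf'c.continuousOn (s := Icc a b)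
    fun_prop
  have hftc : ∫ z in a..b, G' z = h b * f b ^ 2 - h a * f a ^ 2 := by
    refine intervalIntegral.integral_eq_sub_of_hasDerivAt (f := fun z => h z * f z ^ 2)
      (fun z hz => ?_) (hG'c.intervalIntegrable_of_Icc hab)
    rw [uIcc_of_le hab] at hz
    have hfz := (hf.differentiable one_ne_zero z).hasDerivAt
    refine ((hh z hz).fun_mul (hfz.fun_pow 2)).congr_deriv ?_
    simp only [G']
    ring
  have hpt : ∀ z ∈ Icc a b, 0 ≤ κ * deriv f z ^ 2 - m * f z ^ 2 - G' z := by
    intro z hz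
    have hsq : κ * deriv f z ^ 2 - m * f z ^ 2 - G' z
        = κ * (deriv f z - h z * f z / κ) ^ 2 - (h' z + h z ^ 2 / κ + m) * f z ^ 2 := by
      simp only [G']
      field_simp
      ring
    rw [hsq]
    have := mul_nonneg (neg_nonneg.2 (hric z hz)) (sq_nonneg (f z))
    have : 0 ≤ κ * (deriv f z - h z * f z / κ) ^ 2 := by positivity
    linarith
  have hint := intervalIntegral.integral_nonneg (μ := volume) hab hpt
  have hi₁ : IntervalIntegrable (fun z => κ * deriv f z ^ 2) volume a b :=
    (by fun_prop : Continuous _).intervalIntegrable _ _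
  have hi₂ : IntervalIntegrable (fun z => m * f z ^ 2) volume a b :=
    (by fun_prop : Continuous _).intervalIntegrable _ _
  rw [intervalIntegral.integral_sub (hi₁.sub hi₂) (hG'c.intervalIntegrable_of_Icc hab),
    intervalIntegral.integral_sub hi₁ hi₂, intervalIntegral.integral_const_mul,
    intervalIntegral.integral_const_mul, hftc] at hint
  linarith

theorem exists_tan_le_and_tan_sub_le {ℓ p q : ℝ} (hℓ : 0 < ℓ) (hℓπ : ℓ ≤ π / 2) (hp : 0 < p)
    (hpq : 1 ≤ p * q) :
    ∃ s, 0 < s ∧ s < π / 2 ∧ s ≤ ℓ ∧ tan s ≤ p ∧ tan (ℓ - s) ≤ q := by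
  have hq : 0 < q := pos_of_mul_pos_right (by linarith) hp.le
  have harc_pos : 0 < arctan p := arctan_pos.2 hp
  have harc_lt := arctan_lt_pi_div_two p
  have htan_mono : MonotoneOn tan (Ioo (-(π / 2)) (π / 2)) := strictMonoOn_tan.monotoneOn
  rcases le_or_gt ℓ (arctan p) with hle | hlt
  · refine ⟨ℓ, hℓ, by linarith, le_rfl, ?_, by simpa using hq.le⟩
    calc tan ℓ ≤ tan (arctan p) :=
          htan_mono ⟨by linarith, by linarith⟩ ⟨by linarith, harc_lt⟩ hle
      _ = p := tan_arctan p
  · refine ⟨arctan p, harc_pos, harc_lt, hlt.le, (tan_arctan p).le, ?_⟩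
    calc tan (ℓ - arctan p) ≤ tan (π / 2 - arctan p) :=
          htan_mono ⟨by linarith, by linarith⟩ ⟨by linarith, by linarith⟩ (by linarith)
      _ = p⁻¹ := by rw [tan_pi_div_two_sub, tan_arctan]
      _ ≤ q := by rwa [inv_le_iff_one_le_mul₀ hp, mul_comm]

theorem mul_integral_sq_le_robin {d κ βp βm m : ℝ} (hd : 0 < d) (hκ : 0 < κ) (hβp : 0 < βp)
    (hm : 0 < m) (hm_dir : m ≤ κ * π ^ 2 / (4 * d ^ 2)) (hm_rob : m ≤ βp * βm / κ)
    {f : ℝ → ℝ} (hf : ContDiff ℝ 1 f) :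
    m * (∫ z in (-d)..0, f z ^ 2)
      ≤ κ * (∫ z in (-d)..0, deriv f z ^ 2) + βp * f 0 ^ 2 + βm * f (-d) ^ 2 := by
  set α := √(m / κ)
  have hα : 0 < α := sqrt_pos.2 (by positivity)
  have hκα : κ * α ^ 2 = m := by rw [sq_sqrt (by positivity)]; field_simp
  have hαd : α * d ≤ π / 2 := by
    refine (pow_le_pow_iff_left₀ (by positivity) (by positivity) two_ne_zero).1 ?_
    rw [le_div_iff₀ (by positivity)] at hm_dir
    nlinarith
  have hpq : 1 ≤ βp / (κ * α) * (βm / (κ * α)) := by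
    rw [le_div_iff₀ hκ] at hm_rob
    rw [div_mul_div_comm, one_le_div (by positivity)]
    nlinarith
  obtain ⟨s, hs₀, hsπ, hsℓ, htop, hbot⟩ :=
    exists_tan_le_and_tan_sub_le (by positivity) hαd (by positivity) hpq
  have hcos : ∀ z ∈ Icc (-d) 0, cos (α * z + s) ≠ 0 := by
    intro z hz
    refine (cos_pos_of_mem_Ioo ⟨?_, ?_⟩).ne' <;> nlinarith [hz.1, hz.2]
  set h : ℝ → ℝ := fun z => -(κ * α) * tan (α * z + s)
  set h' : ℝ → ℝ := fun z => -(κ * α ^ 2) / cos (α * z + s) ^ 2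
  have hh : ∀ z ∈ Icc (-d) 0, HasDerivAt h (h' z) z := by
    intro z hz
    refine (((hasDerivAt_tan (hcos z hz)).comp z
      (((hasDerivAt_id z).const_mul α).add_const s)).const_mul (-(κ * α))).congr_deriv ?_
    simp only [h']
    field_simp
  have hh' : ContinuousOn h' (Icc (-d) 0) :=
    ContinuousOn.div (by fun_prop) (by fun_prop) fun z hz => pow_ne_zero 2 (hcos z hz)
  have hriccati : ∀ z ∈ Icc (-d) 0, h' z + h z ^ 2 / κ + m ≤ 0 := by
    intro z hz
    refine le_of_eq ?_
    have hc := hcos z hz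
    simp only [h, h', ← hκα, tan_eq_sin_div_cos]
    field_simp
    linear_combination (κ * α ^ 2) * sin_sq_add_cos_sq (α * z + s)
  have hbound := mul_integral_sq_le_of_riccati (by linarith) hκ hf hh hh' hriccati
  have hneg : α * -d + s = -(α * d - s) := by ring
  simp only [h, mul_zero, zero_add, hneg, tan_neg] at hbound
  have htop' : κ * α * tan s ≤ βp := by rwa [le_div_iff₀' (by positivity)] at htop
  have hbot' : κ * α * tan (α * d - s) ≤ βm := by rwa [le_div_iff₀' (by positivity)] at hbot
  nlinarith [mul_le_mul_of_nonneg_right htop' (sq_nonneg (f 0)),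
    mul_le_mul_of_nonneg_right hbot' (sq_nonneg (f (-d)))]

def finThreeEquivProd : ((ℝ × ℝ) × ℝ) ≃ᵐ (Fin 3 → ℝ) :=
  (MeasurableEquiv.prodComm : ((ℝ × ℝ) × ℝ) ≃ᵐ (ℝ × (ℝ × ℝ))).trans <|
    ((MeasurableEquiv.refl ℝ).prodCongr MeasurableEquiv.finTwoArrow.symm).trans
      (MeasurableEquiv.piFinSuccAbove (fun _ : Fin 3 => ℝ) 2).symm

@[simp]
theorem finThreeEquivProd_apply (q : (ℝ × ℝ) × ℝ) :
    finThreeEquivProd q = ![q.1.1, q.1.2, q.2] := by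
  funext i
  fin_cases i <;> rfl

theorem measurePreserving_finThreeEquivProd :
    MeasurePreserving finThreeEquivProd volume volume := by
  have hswap : MeasurePreserving
      (MeasurableEquiv.prodComm : ((ℝ × ℝ) × ℝ) ≃ᵐ (ℝ × (ℝ × ℝ))) volume volume := by
    rw [Measure.volume_eq_prod, Measure.volume_eq_prod]
    exact Measure.measurePreserving_swap
  have htwo : MeasurePreserving
      ((MeasurableEquiv.refl ℝ).prodCongr (MeasurableEquiv.finTwoArrow (α := ℝ)).symm)
      volume volume := by
    rw [Measure.volume_eq_prod, Measure.volume_eq_prod]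
    exact (MeasurePreserving.id volume).prod (volume_preserving_finTwoArrow ℝ).symm
  exact (volume_preserving_piFinSuccAbove (fun _ : Fin 3 => ℝ) 2).symm.comp (htwo.comp hswap)

theorem finThreeEquivProd_preimage_pi (s₁ s₂ s₃ : Set ℝ) :
    finThreeEquivProd ⁻¹' univ.pi ![s₁, s₂, s₃] = (s₁ ×ˢ s₂) ×ˢ s₃ := by
  ext q
  simp [Fin.forall_fin_succ, and_assoc]

theorem integrable_prod_of_integrableOn_pi {s₁ s₂ s₃ : Set ℝ} {F : (Fin 3 → ℝ) → ℝ}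
    (hF : IntegrableOn F (univ.pi ![s₁, s₂, s₃])) :
    Integrable (fun q : (ℝ × ℝ) × ℝ => F ![q.1.1, q.1.2, q.2])
      ((volume.restrict (s₁ ×ˢ s₂)).prod (volume.restrict s₃)) := by
  have := ((measurePreserving_finThreeEquivProd.restrict_preimage_emb
    finThreeEquivProd.measurableEmbedding _).integrable_comp_emb
    finThreeEquivProd.measurableEmbedding).2 hF
  rw [finThreeEquivProd_preimage_pi, Measure.volume_eq_prod, ← Measure.prod_restrict] at this
  simpa [Function.comp_def] using this

theorem setIntegral_pi_eq_integral_integral {s₁ s₂ s₃ : Set ℝ} {F : (Fin 3 → ℝ) → ℝ}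
    (hF : IntegrableOn F (univ.pi ![s₁, s₂, s₃])) :
    ∫ x in univ.pi ![s₁, s₂, s₃], F x = ∫ p in s₁ ×ˢ s₂, ∫ z in s₃, F ![p.1, p.2, z] := by
  rw [← measurePreserving_finThreeEquivProd.setIntegral_preimage_emb
    finThreeEquivProd.measurableEmbedding, finThreeEquivProd_preimage_pi,
    Measure.volume_eq_prod, ← Measure.prod_restrict]
  simp only [finThreeEquivProd_apply]
  exact integral_prod _ (integrable_prod_of_integrableOn_pi hF)

theorem slab_subset_Icc (L₁ L₂ d : ℝ) : slab L₁ L₂ d ⊆ Icc ![0, 0, -d] ![L₁, L₂, 0] := by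
  rw [← pi_univ_Icc]
  refine pi_mono fun i _ => ?_
  fin_cases i <;> exact Ioo_subset_Icc_self

theorem Continuous.integrableOn_slab {F : (Fin 3 → ℝ) → ℝ} (hF : Continuous F) (L₁ L₂ d : ℝ) :
    IntegrableOn F (slab L₁ L₂ d) :=
  hF.continuousOn.integrableOn_Icc.mono_set (slab_subset_Icc L₁ L₂ d)

theorem Continuous.integrableOn_rect {F : ℝ × ℝ → ℝ} (hF : Continuous F) (L₁ L₂ : ℝ) :
    IntegrableOn F (rect L₁ L₂) :=
  (hF.continuousOn.integrableOn_compact (isCompact_Icc.prod isCompact_Icc)).mono_set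
    (prod_mono Ioo_subset_Icc_self Ioo_subset_Icc_self)

theorem continuous_vecCons_prod_const (c : ℝ) : Continuous fun p : ℝ × ℝ => ![p.1, p.2, c] :=
  continuous_pi fun i => by fin_cases i <;> fun_prop

theorem contDiff_vecCons_last (x y : ℝ) : ContDiff ℝ 1 (fun z : ℝ => ![x, y, z]) := by
  refine contDiff_pi.2 fun i => ?_
  fin_cases i
  exacts [contDiff_const, contDiff_const, contDiff_id]

theorem hasDerivAt_vecCons_last (x y z : ℝ) :
    HasDerivAt (fun z : ℝ => ![x, y, z]) (Pi.single 2 1) z := by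
  refine hasDerivAt_pi.2 fun i => ?_
  fin_cases i <;> simp [hasDerivAt_const, hasDerivAt_id']

theorem deriv_comp_vecCons_last {φ : (Fin 3 → ℝ) → ℝ} (hφ : Differentiable ℝ φ) (x y z : ℝ) :
    deriv (fun z => φ ![x, y, z]) z = pd 2 φ ![x, y, z] :=
  ((hφ _).hasFDerivAt.comp_hasDerivAt z (hasDerivAt_vecCons_last x y z)).deriv

theorem ContDiff.continuous_pd {φ : (Fin 3 → ℝ) → ℝ} (hφ : ContDiff ℝ 1 φ) (i : Fin 3) :
    Continuous (pd i φ) :=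
  (hφ.continuous_fderiv one_ne_zero).clm_apply continuous_const

theorem mul_setIntegral_slab_sq_le {L₁ L₂ d κ βp βm m : ℝ} (hd : 0 < d) (hκ : 0 < κ)
    (hβp : 0 < βp) (hm : 0 < m) (hm_dir : m ≤ κ * π ^ 2 / (4 * d ^ 2))
    (hm_rob : m ≤ βp * βm / κ) {φ : (Fin 3 → ℝ) → ℝ} (hφ : ContDiff ℝ 1 φ) :
    m * (∫ x in slab L₁ L₂ d, φ x ^ 2)
      ≤ κ * (∫ x in slab L₁ L₂ d, pd 2 φ x ^ 2)
        + βp * (∫ p in rect L₁ L₂, φ ![p.1, p.2, 0] ^ 2)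
        + βm * (∫ p in rect L₁ L₂, φ ![p.1, p.2, -d] ^ 2) := by
  have hφc := hφ.continuous
  have hfubini : ∀ F : (Fin 3 → ℝ) → ℝ, IntegrableOn F (slab L₁ L₂ d) →
      ∫ x in slab L₁ L₂ d, F x = ∫ p in rect L₁ L₂, ∫ z in Ioo (-d) 0, F ![p.1, p.2, z] :=
    fun F hF => setIntegral_pi_eq_integral_integral hF
  have hfibre_int : ∀ F : (Fin 3 → ℝ) → ℝ, IntegrableOn F (slab L₁ L₂ d) →
      IntegrableOn (fun p : ℝ × ℝ => ∫ z in Ioo (-d) 0, F ![p.1, p.2, z]) (rect L₁ L₂) :=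
    fun F hF => (integrable_prod_of_integrableOn_pi hF).integral_prod_left
  have hsq : IntegrableOn (fun x => φ x ^ 2) (slab L₁ L₂ d) := (hφc.pow 2).integrableOn_slab ..
  have hpdsq : IntegrableOn (fun x => pd 2 φ x ^ 2) (slab L₁ L₂ d) :=
    ((hφ.continuous_pd 2).pow 2).integrableOn_slab ..
  have hrect : ∀ c, IntegrableOn (fun p : ℝ × ℝ => φ ![p.1, p.2, c] ^ 2) (rect L₁ L₂) :=
    fun c => ((hφc.comp (continuous_vecCons_prod_const c)).pow 2).integrableOn_rect L₁ L₂
  have hfibre : ∀ p : ℝ × ℝ, m * (∫ z in Ioo (-d) 0, φ ![p.1, p.2, z] ^ 2)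
      ≤ κ * (∫ z in Ioo (-d) 0, pd 2 φ ![p.1, p.2, z] ^ 2)
        + βp * φ ![p.1, p.2, 0] ^ 2 + βm * φ ![p.1, p.2, -d] ^ 2 := by
    intro p
    simpa only [Function.comp_def, deriv_comp_vecCons_last (hφ.differentiable one_ne_zero),
      intervalIntegral.integral_of_le (neg_nonpos.2 hd.le), integral_Ioc_eq_integral_Ioo] using
      mul_integral_sq_le_robin hd hκ hβp hm hm_dir hm_rob (hφ.comp (contDiff_vecCons_last p.1 p.2))
  have hpd_int := (hfibre_int _ hpdsq).const_mul κ
  have htop_int := (hrect 0).const_mul βp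
  have hbot_int := (hrect (-d)).const_mul βm
  rw [hfubini _ hsq, hfubini _ hpdsq, ← integral_const_mul, ← integral_const_mul,
    ← integral_const_mul, ← integral_const_mul, ← integral_add hpd_int htop_int,
    ← integral_add (hpd_int.fun_add htop_int) hbot_int]
  exact integral_mono ((hfibre_int _ hsq).const_mul m) ((hpd_int.fun_add htop_int).add hbot_int)
    hfibre

theorem rigid_coercivity_periodic_slab_general
    (d κ βp βm L₁ L₂ : ℝ) (hd : 0 < d) (hκ : 0 < κ) (hβp : 0 < βp) (hβm : 0 < βm)
    (φ : (Fin 3 → ℝ) → ℝ) (hφ : ContDiff ℝ 1 φ) :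
    min (κ * π ^ 2 / (4 * d ^ 2)) (βp * βm / κ) * (∫ x in slab L₁ L₂ d, (φ x) ^ 2) ≤
      κ * (∫ x in slab L₁ L₂ d, (pd 2 φ x) ^ 2)
        + βp * (∫ p in rect L₁ L₂, (φ ![p.1, p.2, 0]) ^ 2)
        + βm * (∫ p in rect L₁ L₂, (φ ![p.1, p.2, -d]) ^ 2)
    ∧ κ * (∫ x in slab L₁ L₂ d, (pd 2 φ x) ^ 2)
        + βp * (∫ p in rect L₁ L₂, (φ ![p.1, p.2, 0]) ^ 2)
        + βm * (∫ p in rect L₁ L₂, (φ ![p.1, p.2, -d]) ^ 2)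
      ≤ κ * (∫ x in slab L₁ L₂ d, ∑ i, (pd i φ x) ^ 2)
        + βp * (∫ p in rect L₁ L₂, (φ ![p.1, p.2, 0]) ^ 2)
        + βm * (∫ p in rect L₁ L₂, (φ ![p.1, p.2, -d]) ^ 2) := by
  have hm : 0 < min (κ * π ^ 2 / (4 * d ^ 2)) (βp * βm / κ) :=
    lt_min (by positivity) (by positivity)
  refine ⟨mul_setIntegral_slab_sq_le hd hκ hβp hm (min_le_left _ _) (min_le_right _ _) hφ, ?_⟩
  have hgrad : ∫ x in slab L₁ L₂ d, (pd 2 φ x) ^ 2 ≤ ∫ x in slab L₁ L₂ d, ∑ i, (pd i φ x) ^ 2 :=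
    integral_mono_of_nonneg (ae_of_all _ fun _ => sq_nonneg _)
      ((continuous_finsetSum _ fun i _ => (hφ.continuous_pd i).pow 2).integrableOn_slab ..)
      (ae_of_all _ fun x => Finset.single_le_sum (f := fun i => (pd i φ x) ^ 2)
        (fun i _ => sq_nonneg _) (Finset.mem_univ 2))
  gcongr

/-- **Coercivity of the dissipation functional on a rigid periodic slab, case
`β₊, β₋ ∈ (0,∞)`.**  For every continuously differentiable horizontally periodic `φ`,
`min{κπ²/(4d²), β₊β₋/κ} ∫_Ω |φ|² ≤ 𝒱_β[φ] ≤ 𝒟_β[φ]`, where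
`𝒱_β[φ] = κ∫_Ω |∂₃φ|² + β₊∫_{Σ₊}|φ|² + β₋∫_{Σ₋}|φ|²` is the vertical dissipation and
`𝒟_β[φ] = κ∫_Ω |∇φ|² + β₊∫_{Σ₊}|φ|² + β₋∫_{Σ₋}|φ|²`. -/
theorem rigid_coercivity_periodic_slab
    (d κ βp βm L₁ L₂ : ℝ) (hd : 0 < d) (hκ : 0 < κ) (hβp : 0 < βp) (hβm : 0 < βm)
    (hL₁ : 0 < L₁) (hL₂ : 0 < L₂)
    (φ : (Fin 3 → ℝ) → ℝ) (hφ : ContDiff ℝ 1 φ)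
    (hper1 : ∀ x, φ (x + Pi.single 0 L₁) = φ x)
    (hper2 : ∀ x, φ (x + Pi.single 1 L₂) = φ x) :
    min (κ * π ^ 2 / (4 * d ^ 2)) (βp * βm / κ) * (∫ x in slab L₁ L₂ d, (φ x) ^ 2) ≤
      κ * (∫ x in slab L₁ L₂ d, (pd 2 φ x) ^ 2)
        + βp * (∫ p in rect L₁ L₂, (φ ![p.1, p.2, 0]) ^ 2)
        + βm * (∫ p in rect L₁ L₂, (φ ![p.1, p.2, -d]) ^ 2)
    ∧ κ * (∫ x in slab L₁ L₂ d, (pd 2 φ x) ^ 2)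
        + βp * (∫ p in rect L₁ L₂, (φ ![p.1, p.2, 0]) ^ 2)
        + βm * (∫ p in rect L₁ L₂, (φ ![p.1, p.2, -d]) ^ 2)
      ≤ κ * (∫ x in slab L₁ L₂ d, ∑ i, (pd i φ x) ^ 2)
        + βp * (∫ p in rect L₁ L₂, (φ ![p.1, p.2, 0]) ^ 2)
        + βm * (∫ p in rect L₁ L₂, (φ ![p.1, p.2, -d]) ^ 2) :=
  rigid_coercivity_periodic_slab_general d κ βp βm L₁ L₂ hd hκ hβp hβm φ hφ
end
end
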